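/- arXiv:2012.03934 — 3 statements merged into one kernel-verified Lean document; each statement's English description precedes it below -/
import Mathlib

section
/- Let m, n ∈ ℕ with n ≥ 1 and let D ⊆ S₀ be piecewise syndetic in the semigroup S₀. Then there exists an n-variable word w ∈ Sₙ such that w(ā) ∈ D for every ā ∈ Aₘⁿ. -/
open scoped BigOperators

attribute [local instance] Ultrafilter.mul Ultrafilter.semigroup

namespace InfHJ

variable {α : Type*}

/-- The union alphabet `A = ⋃ᵢ Aᵢ`. -/
def bigA (𝒜 : ℕ → Set α) : Set α := ⋃ i, 𝒜 i

/-- `S₀`: the set of nonempty finite words all of whose letters come from `A`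
(viewed inside the free monoid on `α ⊕ Fin n`, letters `Sum.inl a`, variables `Sum.inr i`). -/
def S0 (𝒜 : ℕ → Set α) (n : ℕ) : Set (FreeMonoid (α ⊕ Fin n)) :=
  {w | FreeMonoid.toList w ≠ [] ∧
    ∀ x ∈ FreeMonoid.toList w, ∃ a ∈ bigA 𝒜, x = Sum.inl a}

/-- `Sₙ`: the set of `n`-variable words over `A`: every letter is in `A` and
every variable `vᵢ` (`i : Fin n`) occurs at least once. -/
def SV (𝒜 : ℕ → Set α) (n : ℕ) : Set (FreeMonoid (α ⊕ Fin n)) :=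
  {w | (∀ x ∈ FreeMonoid.toList w, ∀ a : α, x = Sum.inl a → a ∈ bigA 𝒜) ∧
    ∀ i : Fin n, Sum.inr i ∈ FreeMonoid.toList w}

/-- Substitution `w(x⃗)`: replace every occurrence of the variable `vᵢ` by the letter `xᵢ`. -/
def subst {n : ℕ} (w : FreeMonoid (α ⊕ Fin n)) (x : Fin n → α) :
    FreeMonoid (α ⊕ Fin n) :=
  FreeMonoid.map (Sum.elim Sum.inl fun i => Sum.inl (x i)) w

/-- The tuples `ā ∈ Aₘⁿ`. -/
def tuples (𝒜 : ℕ → Set α) (m n : ℕ) : Set (Fin n → α) := {a | ∀ j, a j ∈ 𝒜 m}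

/-- `D` is a J-set in the (sub)semigroup `S` of the monoid `M`: for every finite set `F` of
sequences in `S` there are `m ≥ 1`, `a₁,…,a_{m+1} ∈ S` and `t₁ < … < t_m` such that
`a₁ f(t₁) a₂ f(t₂) ⋯ a_m f(t_m) a_{m+1} ∈ D` for every `f ∈ F`. -/
def IsJSetIn {M : Type*} [Monoid M] (S D : Set M) : Prop :=
  ∀ F : Finset (ℕ → M), (∀ f ∈ F, ∀ t, f t ∈ S) →
    ∃ m : ℕ, 1 ≤ m ∧ ∃ a : Fin (m + 1) → M, (∀ i, a i ∈ S) ∧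
      ∃ t : Fin m → ℕ, StrictMono t ∧ ∀ f ∈ F,
        (List.ofFn fun i : Fin m => a i.castSucc * f (t i)).prod * a (Fin.last m) ∈ D

/-- `D` is piecewise syndetic in the (sub)semigroup `S` of the monoid `M`: there is a finite
`F ⊆ S` such that for every finite `E ⊆ S` there is `x ∈ S` with `E·x ⊆ ⋃_{t ∈ F} t⁻¹D`. -/
def IsPWSIn {M : Type*} [Monoid M] (S D : Set M) : Prop :=
  ∃ F : Finset M, ↑F ⊆ S ∧
    ∀ E : Finset M, ↑E ⊆ S → ∃ x ∈ S, ∀ e ∈ E, ∃ t ∈ F, t * (e * x) ∈ D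

/-- A (two-sided) ideal of the subsemigroup `B`. -/
def IsIdealIn {T : Type*} [Mul T] (B I : Set T) : Prop :=
  I.Nonempty ∧ I ⊆ B ∧ ∀ x ∈ I, ∀ t ∈ B, t * x ∈ I ∧ x * t ∈ I

/-- `K` is the smallest (two-sided) ideal of the subsemigroup `B`. -/
def IsSmallestIdealIn {T : Type*} [Mul T] (B K : Set T) : Prop :=
  IsIdealIn B K ∧ ∀ I, IsIdealIn B I → K ⊆ I

/-- `D` is central in the (sub)semigroup `S` of the semigroup `M`: `D` belongs to some
idempotent ultrafilter lying in the smallest two-sided ideal of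
`βS = {q : Ultrafilter M | S ∈ q}`. -/
def IsCentralIn {M : Type*} [Semigroup M] (S D : Set M) : Prop :=
  ∃ p : Ultrafilter M, S ∈ p ∧ p * p = p ∧
    (∃ K : Set (Ultrafilter M), IsSmallestIdealIn {q : Ultrafilter M | S ∈ q} K ∧ p ∈ K) ∧
    D ∈ p

/-- `D` is a C-set in the (sub)semigroup `S` of the monoid `M`: `D` belongs to some
idempotent ultrafilter on `S` all of whose members are J-sets in `S`. -/
def IsCSetIn {M : Type*} [Monoid M] (S D : Set M) : Prop :=
  ∃ p : Ultrafilter M, S ∈ p ∧ p * p = p ∧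
    (∀ B ∈ p, IsJSetIn S (B ∩ S)) ∧ D ∈ p

/-- `FS(⟨xₙ⟩)` in a commutative additive monoid: all finite sums over nonempty finite index sets. -/
def FSset {T : Type*} [AddCommMonoid T] (x : ℕ → T) : Set T :=
  {s | ∃ H : Finset ℕ, H.Nonempty ∧ s = ∑ n ∈ H, x n}

/-- `FP(⟨y_t⟩)` in a (not necessarily commutative) monoid: all products
`y_{t₁} ⋯ y_{t_l}` with `t₁ < … < t_l`, taken in increasing order of indices. -/
def FPset {T : Type*} [Monoid T] (y : ℕ → T) : Set T :=
  {u | ∃ G : Finset ℕ, G.Nonempty ∧ u = ((G.sort (· ≤ ·)).map y).prod}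

/-- `C` is an IP set in the commutative monoid `T`. -/
def IsIPSet {T : Type*} [AddCommMonoid T] (C : Set T) : Prop :=
  ∃ x : ℕ → T, FSset x ⊆ C

/-- `τ(w) = |w|_{v}`: the number of occurrences of variables in `w`
(for one-variable words this is the number of occurrences of `v₁`). -/
def tauCount {n : ℕ} (w : FreeMonoid (α ⊕ Fin n)) : ℕ :=
  (FreeMonoid.toList w).countP Sum.isRight

/-- `T`: the words over `{v₁,…,v_k}` in which every `vᵢ` occurs. -/
def Tfull (k : ℕ) : Set (FreeMonoid (Fin k)) :=
  {u | FreeMonoid.toList u ≠ [] ∧ ∀ i : Fin k, i ∈ FreeMonoid.toList u}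

/-- `τ(w)`: delete from `w` all letters of `A` and all variables `vᵢ` with `i ≥ k`,
leaving a word over `{v₁,…,v_k}`. -/
def tauDel {n : ℕ} (k : ℕ) (w : FreeMonoid (α ⊕ Fin n)) : FreeMonoid (Fin k) :=
  FreeMonoid.ofList <| (FreeMonoid.toList w).filterMap fun x =>
    match x with
    | Sum.inl _ => none
    | Sum.inr i => if h : (i : ℕ) < k then some ⟨i, h⟩ else none

/-- Substitution fixes words without variables. -/
lemma subst_fix {n : ℕ} (w : FreeMonoid (α ⊕ Fin n)) (a : Fin n → α)
    (h : ∀ x ∈ FreeMonoid.toList w, ∃ b : α, x = Sum.inl b) : subst w a = w := by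
  unfold subst
  have : (FreeMonoid.toList w).map (Sum.elim Sum.inl fun i => Sum.inl (a i))
      = FreeMonoid.toList w := by
    conv_rhs => rw [← List.map_id (FreeMonoid.toList w)]
    apply List.map_congr_left
    intro x hx
    obtain ⟨b, rfl⟩ := h x hx
    rfl
  exact congrArg FreeMonoid.ofList this

theorem statement0 (𝒜 : ℕ → Set α) (hmono : Monotone 𝒜)
    (hfin : ∀ i, (𝒜 i).Finite) (hne : ∀ i, (𝒜 i).Nonempty)
    (m n : ℕ) (hn : 1 ≤ n)
    (D : Set (FreeMonoid (α ⊕ Fin n))) (hD : D ⊆ S0 𝒜 n)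
    (hpws : IsPWSIn (S0 𝒜 n) D) :
    ∃ w ∈ SV 𝒜 n, ∀ a ∈ tuples 𝒜 m n, subst w a ∈ D := by
  classical
  obtain ⟨F, hFS, hF⟩ := hpws
  obtain ⟨a₀, ha₀⟩ := hne m
  have hAm : ∀ b ∈ 𝒜 m, b ∈ bigA 𝒜 := fun b hb => Set.mem_iUnion.mpr ⟨m, hb⟩
  haveI : Finite ↥(𝒜 m) := (hfin m).to_subtype
  obtain ⟨N, hN⟩ :=
    Combinatorics.Subspace.exists_mono_in_high_dimension_fin ↥(𝒜 m) ↥F (Fin n)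
  haveI := (hfin m).fintype
  -- the flattened word corresponding to a point of the cube
  set word : (Fin N → ↥(𝒜 m)) → FreeMonoid (α ⊕ Fin n) :=
    fun f => FreeMonoid.ofList
      (Sum.inl a₀ :: List.ofFn fun k : Fin N => Sum.inl (f k : α)) with hword
  have hwordS0 : ∀ f, word f ∈ S0 𝒜 n := by
    intro f
    constructor
    · simp [hword]
    · intro y hy
      simp only [hword, FreeMonoid.toList_ofList, List.mem_cons,
        List.mem_ofFn, Set.mem_range] at hy
      rcases hy with rfl | ⟨k, rfl⟩
      · exact ⟨a₀, hAm a₀ ha₀, rfl⟩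
      · exact ⟨(f k : α), hAm _ (f k).2, rfl⟩
  set E : Finset (FreeMonoid (α ⊕ Fin n)) :=
    (Finset.univ : Finset (Fin N → ↥(𝒜 m))).image word with hE
  obtain ⟨x, hx, hxD⟩ := hF E (by
    intro e he
    simp only [hE, Finset.coe_image, Set.mem_image] at he
    obtain ⟨f, _, rfl⟩ := he
    exact hwordS0 f)
  have key : ∀ f : Fin N → ↥(𝒜 m), ∃ t : ↥F, (t : FreeMonoid (α ⊕ Fin n)) * (word f * x) ∈ D := by
    intro f
    obtain ⟨t, ht, htD⟩ := hxD (word f) (Finset.mem_image_of_mem word (Finset.mem_univ f))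
    exact ⟨⟨t, ht⟩, htD⟩
  choose C hC using key
  obtain ⟨l, t₀, ht₀⟩ := hN C
  -- the variable word
  set vword : FreeMonoid (α ⊕ Fin n) :=
    FreeMonoid.ofList (Sum.inl a₀ :: List.ofFn fun k : Fin N =>
      Sum.elim (fun c : ↥(𝒜 m) => Sum.inl (c : α)) Sum.inr (l.idxFun k)) with hvword
  refine ⟨(t₀ : FreeMonoid (α ⊕ Fin n)) * (vword * x), ?_, ?_⟩
  · constructor
    · intro y hy b hb
      have hyl : y ∈ FreeMonoid.toList (t₀ : FreeMonoid (α ⊕ Fin n)) ++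
          (FreeMonoid.toList vword ++ FreeMonoid.toList x) := hy
      simp only [List.mem_append] at hyl
      rcases hyl with h1 | h2 | h3
      · obtain ⟨a, ha, rfl⟩ := (hFS t₀.2).2 y h1
        cases hb; exact ha
      · simp only [hvword, FreeMonoid.toList_ofList, List.mem_cons, List.mem_ofFn,
          Set.mem_range] at h2
        rcases h2 with rfl | ⟨k, hk⟩
        · cases hb; exact hAm a₀ ha₀
        · rw [hb] at hk
          cases hcase : l.idxFun k with
          | inl c =>
            rw [hcase] at hk
            simp only [Sum.elim_inl, Sum.inl.injEq] at hk
            rw [← hk]; exact hAm _ c.2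
          | inr j => rw [hcase] at hk; simp at hk
      · obtain ⟨a, ha, rfl⟩ := hx.2 y h3
        cases hb; exact ha
    · intro i
      obtain ⟨k, hk⟩ := l.proper i
      have : Sum.inr i ∈ FreeMonoid.toList vword := by
        simp only [hvword, FreeMonoid.toList_ofList, List.mem_cons, List.mem_ofFn,
          Set.mem_range]
        exact Or.inr ⟨k, by rw [hk]; rfl⟩
      show Sum.inr i ∈ FreeMonoid.toList (t₀ : FreeMonoid (α ⊕ Fin n)) ++
          (FreeMonoid.toList vword ++ FreeMonoid.toList x)
      simp only [List.mem_append]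
      exact Or.inr (Or.inl this)
  · intro a ha
    set b : Fin N → ↥(𝒜 m) := l fun j => ⟨a j, ha j⟩ with hb
    have hsub : subst vword a = word b := by
      unfold subst
      apply congrArg FreeMonoid.ofList
      show (FreeMonoid.toList vword).map _ = _
      simp only [hvword, FreeMonoid.toList_ofList, List.map_cons, List.map_ofFn]
      congr 1
      apply congrArg List.ofFn
      funext k
      simp only [Function.comp]
      cases hcase : l.idxFun k with
      | inl c =>
        simp [hb, Combinatorics.Subspace.apply_inl hcase, hcase]
      | inr j =>
        simp [hb, Combinatorics.Subspace.apply_inr hcase, hcase]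
    have h1 : subst ((t₀ : FreeMonoid (α ⊕ Fin n)) * (vword * x)) a
        = (t₀ : FreeMonoid (α ⊕ Fin n)) * (word b * x) := by
      unfold subst
      rw [map_mul, map_mul]
      show _ * (subst vword a * _) = _
      rw [hsub]
      rw [show (FreeMonoid.map (Sum.elim Sum.inl fun i => Sum.inl (a i)))
        (t₀ : FreeMonoid (α ⊕ Fin n)) = subst _ a from rfl]
      rw [show (FreeMonoid.map (Sum.elim Sum.inl fun i => Sum.inl (a i))) x = subst x a from rfl]
      rw [subst_fix _ a (fun y hy => (((hFS t₀.2).2 y hy).imp fun _ h => h.2)),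
        subst_fix _ a (fun y hy => ((hx.2 y hy).imp fun _ h => h.2))]
    rw [h1]
    have := hC b
    rwa [ht₀] at this


end InfHJ
end

section
/- Let m, n ∈ ℕ with n ≥ 1 and let D ⊆ S₀ be a J-set in the semigroup S₀. Then there exists an n-variable word w ∈ Sₙ such that w(ā) ∈ D for every ā ∈ Aₘⁿ. -/
open scoped BigOperators

attribute [local instance] Ultrafilter.mul Ultrafilter.semigroup

namespace InfHJ

variable {α : Type*}

lemma toList_prod {β : Type*} (l : List (FreeMonoid β)) :
    FreeMonoid.toList l.prod = (l.map FreeMonoid.toList).flatten := by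
  induction l with
  | nil => rfl
  | cons h t ih => simp [ih]

lemma subst_of_noVar {n : ℕ} (w : FreeMonoid (α ⊕ Fin n))
    (h : ∀ x ∈ FreeMonoid.toList w, ∃ a : α, x = Sum.inl a) (x : Fin n → α) :
    subst w x = w := by
  unfold subst
  apply FreeMonoid.toList.injective
  rw [FreeMonoid.toList_map]
  conv_rhs => rw [← List.map_id (FreeMonoid.toList w)]
  apply List.map_congr_left
  intro y hy
  obtain ⟨a, rfl⟩ := h y hy
  rfl

theorem statement1 (𝒜 : ℕ → Set α) (hmono : Monotone 𝒜)
    (hfin : ∀ i, (𝒜 i).Finite) (hne : ∀ i, (𝒜 i).Nonempty)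
    (m n : ℕ) (hn : 1 ≤ n)
    (D : Set (FreeMonoid (α ⊕ Fin n))) (hD : D ⊆ S0 𝒜 n)
    (hJ : IsJSetIn (S0 𝒜 n) D) :
    ∃ w ∈ SV 𝒜 n, ∀ a ∈ tuples 𝒜 m n, subst w a ∈ D := by
  classical
  -- the tuples form a finite set
  have htf : (tuples 𝒜 m n).Finite := by
    have : tuples 𝒜 m n ⊆ Set.pi Set.univ (fun _ : Fin n => 𝒜 m) := by
      intro a ha j _; exact ha j
    exact (Set.Finite.pi fun _ => hfin m).subset this
  -- for a tuple ā, the constant sequence with value the word a₁…aₙ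
  set g : (Fin n → α) → (ℕ → FreeMonoid (α ⊕ Fin n)) :=
    fun a _ => FreeMonoid.ofList (List.ofFn fun j : Fin n => Sum.inl (a j)) with hg
  have hgS0 : ∀ a ∈ tuples 𝒜 m n, ∀ t, g a t ∈ S0 𝒜 n := by
    intro a ha t
    constructor
    · simp [hg]
      omega
    · intro x hx
      simp only [hg, FreeMonoid.toList_ofList, List.mem_ofFn] at hx
      obtain ⟨j, rfl⟩ := hx
      exact ⟨a j, Set.mem_iUnion.2 ⟨m, ha j⟩, rfl⟩
  set F : Finset (ℕ → FreeMonoid (α ⊕ Fin n)) := htf.toFinset.image g with hF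
  obtain ⟨M, hM1, a, haS, t, ht, hprod⟩ := hJ F (by
    intro f hf t
    simp only [hF, Finset.mem_image, Set.Finite.mem_toFinset] at hf
    obtain ⟨b, hb, rfl⟩ := hf
    exact hgS0 b hb t)
  -- the variable word v₁…vₙ
  set u : FreeMonoid (α ⊕ Fin n) :=
    FreeMonoid.ofList (List.ofFn fun j : Fin n => Sum.inr j) with hu
  refine ⟨(List.ofFn fun i : Fin M => a i.castSucc * u).prod * a (Fin.last M), ?_, ?_⟩
  · constructor
    · intro x hx b hxb
      rw [FreeMonoid.toList_mul, toList_prod] at hx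
      rcases List.mem_append.1 hx with hx | hx
      · rw [List.mem_flatten] at hx
        obtain ⟨l, hl, hxl⟩ := hx
        simp only [List.map_ofFn, List.mem_ofFn] at hl
        obtain ⟨i, rfl⟩ := hl
        simp only [Function.comp, FreeMonoid.toList_mul] at hxl
        rcases List.mem_append.1 hxl with hxl | hxl
        · obtain ⟨c, hc, hceq⟩ := (haS i.castSucc).2 x hxl
          rw [hxb] at hceq; cases hceq; exact hc
        · simp only [hu, FreeMonoid.toList_ofList, List.mem_ofFn] at hxl
          obtain ⟨j, rfl⟩ := hxl
          simp at hxb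
      · obtain ⟨c, hc, hceq⟩ := (haS (Fin.last M)).2 x hx
        rw [hxb] at hceq; cases hceq; exact hc
    · intro i
      rw [FreeMonoid.toList_mul, toList_prod]
      apply List.mem_append.2
      left
      rw [List.mem_flatten]
      refine ⟨FreeMonoid.toList (a (⟨0, by omega⟩ : Fin M).castSucc * u), ?_, ?_⟩
      · simp only [List.map_ofFn, List.mem_ofFn]
        exact ⟨⟨0, by omega⟩, rfl⟩
      · rw [FreeMonoid.toList_mul]
        apply List.mem_append.2
        right
        simp only [hu, FreeMonoid.toList_ofList, List.mem_ofFn]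
        exact ⟨i, rfl⟩
  · intro b hb
    have hgF : g b ∈ F := by
      simp only [hF, Finset.mem_image, Set.Finite.mem_toFinset]
      exact ⟨b, hb, rfl⟩
    have key := hprod (g b) hgF
    convert key using 2
    unfold subst
    rw [map_mul, map_list_prod]
    congr 1
    · rw [List.map_ofFn]
      apply congrArg List.prod
      apply congrArg List.ofFn
      funext i
      simp only [Function.comp, map_mul]
      congr 1
      · exact subst_of_noVar _ (fun x hx => ((haS i.castSucc).2 x hx).imp fun c hc => hc.2) b
      · apply FreeMonoid.toList.injective
        simp [hu, hg, FreeMonoid.toList_map, List.map_ofFn, Function.comp]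
    · exact subst_of_noVar _ (fun x hx => ((haS (Fin.last M)).2 x hx).imp fun c hc => hc.2) b

end InfHJ
end

section
/- Let n ≥ 1 and let D ⊆ S₀ be central in the semigroup S₀. Then there exists a sequence ⟨wᵢ⟩_{i=1}^∞ of n-variable words over A such that for every l ≥ 1, every m₁ < m₂ < … < m_l in ℕ, and every choice of ā₁ ∈ A_{m₁}ⁿ, ā₂ ∈ A_{m₂}ⁿ, …, ā_l ∈ A_{m_l}ⁿ, the concatenation w_{m₁}(ā₁) w_{m₂}(ā₂) ⋯ w_{m_l}(ā_l) belongs to D. -/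
open scoped BigOperators

attribute [local instance] Ultrafilter.mul Ultrafilter.semigroup

section Ult
variable {M : Type*}

theorem umem_superset {U : Ultrafilter M} {s t : Set M} (h : s ∈ U) (hsub : s ⊆ t) : t ∈ U :=
  Ultrafilter.mem_coe.1 (Filter.mem_of_superset (Ultrafilter.mem_coe.2 h) hsub)

theorem umem_inter {U : Ultrafilter M} {s t : Set M} (h : s ∈ U) (h' : t ∈ U) : s ∩ t ∈ U :=
  Ultrafilter.mem_coe.1 (Filter.inter_mem (Ultrafilter.mem_coe.2 h) (Ultrafilter.mem_coe.2 h'))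

theorem mem_ultra_mul [Mul M] (U V : Ultrafilter M) (s : Set M) :
    s ∈ U * V ↔ {m | {m' | m * m' ∈ s} ∈ V} ∈ U := by
  have h := Ultrafilter.eventually_mul U V (· ∈ s)
  simpa [Filter.eventually_iff] using h

theorem mem_mul_of_subsets [Mul M] {A B C : Set M} (h : ∀ a ∈ A, ∀ b ∈ B, a * b ∈ C)
    {q r : Ultrafilter M} (hA : A ∈ q) (hB : B ∈ r) : C ∈ q * r := by
  rw [mem_ultra_mul]
  exact umem_superset hA fun a ha => umem_superset hB fun b hb => h a ha b hb

theorem ultmap_mul [Mul M] {f : M → M} (hf : ∀ a b, f (a * b) = f a * f b)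
    (U V : Ultrafilter M) : Ultrafilter.map f (U * V) = Ultrafilter.map f U * Ultrafilter.map f V := by
  ext s
  simp only [Ultrafilter.mem_map, mem_ultra_mul, Set.preimage_setOf_eq, Set.mem_preimage, hf]

theorem ultmap_fix {f : M → M} {p : Ultrafilter M} (h : {x | f x = x} ∈ p) :
    Ultrafilter.map f p = p := by
  ext s
  rw [Ultrafilter.mem_map]
  constructor
  · intro hs
    exact umem_superset (umem_inter hs h) fun x ⟨hx1, hx2⟩ => hx2 ▸ hx1
  · intro hs
    exact umem_superset (umem_inter hs h) fun x ⟨hx1, hx2⟩ =>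
      show f x ∈ s from hx2.symm ▸ hx1

theorem continuous_ultmap {X Y : Type*} (f : X → Y) : Continuous (Ultrafilter.map f) :=
  ultrafilterBasis_is_basis.continuous_iff.2 <| Set.forall_mem_range.mpr fun s =>
    ultrafilter_isOpen_basic (f ⁻¹' s)

end Ult

namespace InfHJ

variable {α : Type*}

section Min
variable {M : Type*} [Semigroup M]

theorem ult_minimal_idem {B : Set (Ultrafilter M)} (hBc : IsClosed B)
    (hBmul : ∀ x ∈ B, ∀ y ∈ B, x * y ∈ B)
    {K : Set (Ultrafilter M)} (hK : IsSmallestIdealIn B K)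
    {p x : Ultrafilter M} (hp : p ∈ K) (hx : x ∈ B) (hxx : x * x = x)
    (hpx : p * x = x) (hxp : x * p = x) : x = p := by
  obtain ⟨⟨hKne, hKB, hKabs⟩, hKmin⟩ := hK
  have hpB : p ∈ B := hKB hp
  have hRmclosed : ∀ y : Ultrafilter M, IsClosed ((· * y) '' B) := fun y =>
    (hBc.isCompact.image (Ultrafilter.continuous_mul_left y)).isClosed
  set LI : Set (Ultrafilter M) → Prop := fun L =>
    L.Nonempty ∧ IsClosed L ∧ L ⊆ B ∧ ∀ t ∈ B, ∀ y ∈ L, t * y ∈ L with hLIdef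
  have hRmLI : ∀ y ∈ B, LI ((· * y) '' B) := by
    intro y hy
    refine ⟨⟨p * y, p, hpB, rfl⟩, hRmclosed y, ?_, ?_⟩
    · rintro z ⟨t, ht, rfl⟩; exact hBmul t ht y hy
    · rintro t ht z ⟨s, hs, rfl⟩
      exact ⟨t * s, hBmul t ht s hs, mul_assoc t s y⟩
  obtain ⟨L, hLsub, hLminimal⟩ :=
    zorn_superset_nonempty {L | LI L ∧ L ⊆ (· * p) '' B}
      (by
        intro c hcS hchain hcne
        haveI : Nonempty c := hcne.to_subtype
        have hdir : DirectedOn (· ⊇ ·) c := IsChain.directedOn hchain.symm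
        have hne : (⋂₀ c).Nonempty :=
          IsCompact.nonempty_sInter_of_directed_nonempty_isCompact_isClosed hdir
            (fun U hU => (hcS hU).1.1) (fun U hU => (hcS hU).1.2.1.isCompact)
            (fun U hU => (hcS hU).1.2.1)
        obtain ⟨s₀, hs₀⟩ := hcne
        refine ⟨⋂₀ c, ⟨⟨hne, isClosed_sInter fun U hU => (hcS hU).1.2.1,
          (Set.sInter_subset_of_mem hs₀).trans (hcS hs₀).1.2.2.1, ?_⟩,
          (Set.sInter_subset_of_mem hs₀).trans (hcS hs₀).2⟩,
          fun s hs => Set.sInter_subset_of_mem hs⟩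
        intro t ht y hy
        exact Set.mem_sInter.2 fun U hU => (hcS hU).1.2.2.2 t ht y (Set.mem_sInter.1 hy U hU))
      ((· * p) '' B) ⟨hRmLI p hpB, subset_rfl⟩
  obtain ⟨⟨⟨hLne, hLcl, hLB, hLabs⟩, hLRmp⟩, hLmin⟩ := hLminimal
  have hLRm : ∀ y ∈ L, (· * y) '' B = L := by
    intro y hy
    have hsub2 : (· * y) '' B ⊆ L := by rintro z ⟨t, ht, rfl⟩; exact hLabs t ht y hy
    exact hsub2.antisymm (hLmin ⟨hRmLI y (hLB hy), hsub2.trans hLRmp⟩ hsub2)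
  set MinP : Set (Ultrafilter M) → Prop := fun L' =>
    L'.Nonempty ∧ L' ⊆ B ∧ (∀ t ∈ B, ∀ y ∈ L', t * y ∈ L') ∧
      ∀ y ∈ L', ∀ z ∈ L', ∃ t ∈ B, z = t * y with hMinPdef
  have hLMinP : MinP L := by
    refine ⟨hLne, hLB, hLabs, fun y hy z hz => ?_⟩
    rw [← hLRm y hy] at hz
    obtain ⟨t, ht, rfl⟩ := hz
    exact ⟨t, ht, rfl⟩
  set U : Set (Ultrafilter M) := {q | ∃ L', MinP L' ∧ q ∈ L'} with hUdef
  have hUideal : IsIdealIn B U := by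
    obtain ⟨q₀, hq₀⟩ := hLne
    refine ⟨⟨q₀, L, hLMinP, hq₀⟩, ?_, ?_⟩
    · rintro q ⟨L', hL', hq⟩; exact hL'.2.1 hq
    · rintro q ⟨L', hL', hq⟩ t ht
      constructor
      · exact ⟨L', hL', hL'.2.2.1 t ht q hq⟩
      · refine ⟨(· * t) '' L', ⟨⟨q * t, q, hq, rfl⟩, ?_, ?_, ?_⟩, ⟨q, hq, rfl⟩⟩
        · rintro z ⟨y, hy, rfl⟩; exact hBmul y (hL'.2.1 hy) t ht
        · rintro s hs z ⟨y, hy, rfl⟩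
          exact ⟨s * y, hL'.2.2.1 s hs y hy, mul_assoc s y t⟩
        · rintro a ⟨y, hy, rfl⟩ z ⟨w, hw, rfl⟩
          obtain ⟨s, hs, rfl⟩ := hL'.2.2.2 y hy w hw
          exact ⟨s, hs, mul_assoc s y t⟩
  obtain ⟨Lp, hLpMin, hpLp⟩ := hKmin U hUideal hp
  have hxLp : x ∈ Lp := hxp ▸ hLpMin.2.2.1 x hx p hpLp
  obtain ⟨t, ht, hpt⟩ := hLpMin.2.2.2 x hxLp p hpLp
  have hpxp : p * x = p := by rw [hpt, mul_assoc, hxx]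
  calc x = p * x := hpx.symm
    _ = p := hpxp

end Min


section Words
variable {𝒜 : ℕ → Set α} {n : ℕ}

theorem S0_mul {a b : FreeMonoid (α ⊕ Fin n)} (ha : a ∈ S0 𝒜 n) (hb : b ∈ S0 𝒜 n) :
    a * b ∈ S0 𝒜 n := by
  refine ⟨?_, ?_⟩ <;> simp only [FreeMonoid.toList_mul]
  · simp [ha.1]
  · intro x hx
    rcases List.mem_append.1 hx with h | h
    · exact ha.2 x h
    · exact hb.2 x h

theorem S0_letters {a : FreeMonoid (α ⊕ Fin n)} (ha : a ∈ S0 𝒜 n) :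
    ∀ x ∈ FreeMonoid.toList a, ∀ c : α, x = Sum.inl c → c ∈ bigA 𝒜 := by
  intro x hx c hc
  obtain ⟨d, hd, rfl⟩ := ha.2 x hx
  rw [Sum.inl.injEq] at hc
  exact hc ▸ hd

theorem SV_mul_right {a b : FreeMonoid (α ⊕ Fin n)} (ha : a ∈ SV 𝒜 n) (hb : b ∈ S0 𝒜 n) :
    a * b ∈ SV 𝒜 n := by
  refine ⟨?_, ?_⟩ <;> simp only [FreeMonoid.toList_mul]
  · intro x hx c hc
    rcases List.mem_append.1 hx with h | h
    · exact ha.1 x h c hc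
    · exact S0_letters hb x h c hc
  · intro i
    exact List.mem_append.2 (Or.inl (ha.2 i))

theorem SV_mul_left {a b : FreeMonoid (α ⊕ Fin n)} (ha : a ∈ S0 𝒜 n) (hb : b ∈ SV 𝒜 n) :
    a * b ∈ SV 𝒜 n := by
  refine ⟨?_, ?_⟩ <;> simp only [FreeMonoid.toList_mul]
  · intro x hx c hc
    rcases List.mem_append.1 hx with h | h
    · exact S0_letters ha x h c hc
    · exact hb.1 x h c hc
  · intro i
    exact List.mem_append.2 (Or.inr (hb.2 i))

theorem SV_mul_SV {a b : FreeMonoid (α ⊕ Fin n)} (ha : a ∈ SV 𝒜 n) (hb : b ∈ SV 𝒜 n) :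
    a * b ∈ SV 𝒜 n := by
  refine ⟨?_, ?_⟩ <;> simp only [FreeMonoid.toList_mul]
  · intro x hx c hc
    rcases List.mem_append.1 hx with h | h
    · exact ha.1 x h c hc
    · exact hb.1 x h c hc
  · intro i
    exact List.mem_append.2 (Or.inl (ha.2 i))

theorem subst_mul {n : ℕ} (a b : FreeMonoid (α ⊕ Fin n)) (x : Fin n → α) :
    subst (a * b) x = subst a x * subst b x :=
  map_mul (FreeMonoid.map _) a b

theorem subst_fixed {a : FreeMonoid (α ⊕ Fin n)} (ha : a ∈ S0 𝒜 n) (x : Fin n → α) :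
    subst a x = a := by
  have h : FreeMonoid.toList (subst a x) = FreeMonoid.toList a := by
    rw [subst, FreeMonoid.toList_map]
    conv_rhs => rw [← List.map_id (FreeMonoid.toList a)]
    refine List.map_congr_left fun y hy => ?_
    obtain ⟨c, _, rfl⟩ := ha.2 y hy
    rfl
  exact h

theorem subst_mem_S0 {a : FreeMonoid (α ⊕ Fin n)} (hn : 1 ≤ n) (ha : a ∈ SV 𝒜 n)
    {m : ℕ} {x : Fin n → α} (hx : x ∈ tuples 𝒜 m n) : subst a x ∈ S0 𝒜 n := by
  constructor
  · rw [subst, FreeMonoid.toList_map]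
    have : Sum.inr ⟨0, hn⟩ ∈ FreeMonoid.toList a := ha.2 ⟨0, hn⟩
    intro hcon
    rw [List.map_eq_nil_iff] at hcon
    simp [hcon] at this
  · rw [subst, FreeMonoid.toList_map]
    intro y hy
    obtain ⟨z, hz, rfl⟩ := List.mem_map.1 hy
    rcases z with c | i
    · exact ⟨c, ha.1 _ hz c rfl, rfl⟩
    · exact ⟨x i, Set.mem_iUnion.2 ⟨m, hx i⟩, rfl⟩

theorem tuples_finite (hfin : ∀ i, (𝒜 i).Finite) (m : ℕ) : (tuples 𝒜 m n).Finite := by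
  have h : tuples 𝒜 m n = Set.pi Set.univ (fun _ : Fin n => 𝒜 m) := by
    ext a; simp [tuples, Set.mem_pi]
  rw [h]
  exact Set.Finite.pi fun _ => hfin m

end Words

section HJ
variable {𝒜 : ℕ → Set α}

theorem hj_lemma (hfin : ∀ i, (𝒜 i).Finite) {n : ℕ} (hn : 1 ≤ n)
    (p : Ultrafilter (FreeMonoid (α ⊕ Fin n)))
    (hp0 : S0 𝒜 n ∈ p) (hpp : p * p = p)
    {K : Set (Ultrafilter (FreeMonoid (α ⊕ Fin n)))}
    (hK : IsSmallestIdealIn {q : Ultrafilter (FreeMonoid (α ⊕ Fin n)) | S0 𝒜 n ∈ q} K)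
    (hpK : p ∈ K) (m : ℕ) (B : Set (FreeMonoid (α ⊕ Fin n))) (hB : B ∈ p) :
    ∃ w ∈ SV 𝒜 n, ∀ x ∈ tuples 𝒜 m n, subst w x ∈ B := by
  set B0 : Set (Ultrafilter (FreeMonoid (α ⊕ Fin n))) := {q | S0 𝒜 n ∈ q} with hB0def
  have hB0c : IsClosed B0 := ultrafilter_isClosed_basic _
  have hB0mul : ∀ x ∈ B0, ∀ y ∈ B0, x * y ∈ B0 := fun q hq r hr =>
    mem_mul_of_subsets (fun a ha b hb => S0_mul ha hb) hq hr
  have hpB0 : p ∈ B0 := hp0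
  set Lp : Set (Ultrafilter (FreeMonoid (α ⊕ Fin n))) := (· * p) '' B0 with hLpdef
  have hLpc : IsClosed Lp :=
    (hB0c.isCompact.image (Ultrafilter.continuous_mul_left p)).isClosed
  -- substitution maps
  have hsubst_mul : ∀ x : Fin n → α, ∀ a b : FreeMonoid (α ⊕ Fin n),
      subst (a * b) x = subst a x * subst b x := fun x a b => subst_mul a b x
  have hmapfix : ∀ x : Fin n → α, Ultrafilter.map (fun w => subst w x) p = p := fun x =>
    ultmap_fix (umem_superset hp0 fun a ha => subst_fixed ha x)
  set E : Set (Ultrafilter (FreeMonoid (α ⊕ Fin n))) := {q | SV 𝒜 n ∈ q} ∩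
    ⋂ x ∈ tuples 𝒜 m n, (Ultrafilter.map (fun w => subst w x)) ⁻¹' Lp with hEdef
  have hEc : IsClosed E := by
    refine (ultrafilter_isClosed_basic _).inter (isClosed_biInter fun x _ => ?_)
    exact hLpc.preimage (continuous_ultmap _)
  -- E is nonempty
  set w₀ : FreeMonoid (α ⊕ Fin n) := FreeMonoid.ofList (List.ofFn fun i : Fin n => Sum.inr i) with hw₀def
  have hw₀ : w₀ ∈ SV 𝒜 n := by
    constructor
    · intro x hx c hc
      rw [hw₀def, FreeMonoid.toList_ofList, List.mem_ofFn] at hx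
      obtain ⟨i, rfl⟩ := hx
      exact absurd hc.symm (by simp)
    · intro i
      rw [hw₀def, FreeMonoid.toList_ofList, List.mem_ofFn]
      exact ⟨i, rfl⟩
  have hEne : E.Nonempty := by
    refine ⟨(pure w₀ : Ultrafilter (FreeMonoid (α ⊕ Fin n))) * p, ?_, ?_⟩
    · exact mem_mul_of_subsets (fun a ha b hb => SV_mul_right ha hb)
        (Ultrafilter.mem_pure.2 hw₀) hp0
    · rw [Set.mem_iInter₂]
      intro x hx
      have : Ultrafilter.map (fun w => subst w x) ((pure w₀ : Ultrafilter (FreeMonoid (α ⊕ Fin n))) * p) =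
          (pure (subst w₀ x) : Ultrafilter (FreeMonoid (α ⊕ Fin n))) * p := by
        rw [ultmap_mul (f := fun w => subst w x) (hsubst_mul x), Ultrafilter.map_pure, hmapfix]
      rw [Set.mem_preimage, this]
      exact ⟨pure (subst w₀ x), Ultrafilter.mem_pure.2 (subst_mem_S0 hn hw₀ hx), rfl⟩
  -- E is a subsemigroup
  have hEmul : ∀ q ∈ E, ∀ r ∈ E, q * r ∈ E := by
    rintro q ⟨hq1, hq2⟩ r ⟨hr1, hr2⟩
    refine ⟨mem_mul_of_subsets (fun a ha b hb => SV_mul_SV ha hb) hq1 hr1, ?_⟩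
    rw [Set.mem_iInter₂] at hq2 hr2 ⊢
    intro x hx
    rw [Set.mem_preimage, ultmap_mul (f := fun w => subst w x) (hsubst_mul x)]
    obtain ⟨s, hs, hse⟩ := hq2 x hx
    obtain ⟨t, ht, hte⟩ := hr2 x hx
    rw [← hse, ← hte]
    refine ⟨s * p * t, hB0mul _ (hB0mul s hs p hpB0) t ht, ?_⟩
    show (s * p * t) * p = (s * p) * (t * p)
    rw [mul_assoc]
  obtain ⟨q₀, hq₀E, hq₀⟩ := exists_idempotent_in_compact_subsemigroup
    Ultrafilter.continuous_mul_left E hEne hEc.isCompact hEmul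
  -- the witness ultrafilter
  have hqV : SV 𝒜 n ∈ p * q₀ :=
    mem_mul_of_subsets (fun a ha b hb => SV_mul_left ha hb) hp0 hq₀E.1
  have hmapq : ∀ x ∈ tuples 𝒜 m n,
      Ultrafilter.map (fun w => subst w x) (p * q₀) = p := by
    intro x hx
    have hq₀x := (Set.mem_iInter₂.1 hq₀E.2) x hx
    rw [Set.mem_preimage] at hq₀x
    obtain ⟨s, hs, hse⟩ := hq₀x
    set e : Ultrafilter (FreeMonoid (α ⊕ Fin n)) := Ultrafilter.map (fun w => subst w x) q₀ with hedef
    have heB0 : e ∈ B0 := by rw [← hse]; exact hB0mul s hs p hpB0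
    have hep : e * p = e := by rw [← hse, mul_assoc, hpp]
    have hee : e * e = e := by
      rw [hedef, ← ultmap_mul (f := fun w => subst w x) (hsubst_mul x), hq₀]
    have hxx : (p * e) * (p * e) = p * e := by
      rw [mul_assoc p e (p * e), ← mul_assoc e p e, hep, hee]
    have hpx : p * (p * e) = p * e := by rw [← mul_assoc, hpp]
    have hxp : (p * e) * p = p * e := by rw [mul_assoc, hep]
    have hpeB0 : p * e ∈ B0 := hB0mul p hpB0 e heB0
    have hkey : p * e = p := ult_minimal_idem hB0c hB0mul hK hpK hpeB0 hxx hpx hxp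
    rw [ultmap_mul (f := fun w => subst w x) (hsubst_mul x), hmapfix, ← hedef, hkey]
  -- extract the word
  have hTfin : (tuples 𝒜 m n).Finite := tuples_finite hfin m
  have hbig : (SV 𝒜 n ∩ ⋂ x ∈ tuples 𝒜 m n, (fun w => subst w x) ⁻¹' B) ∈ p * q₀ := by
    refine umem_inter hqV ?_
    have : (⋂ x ∈ tuples 𝒜 m n, (fun w => subst w x) ⁻¹' B) ∈ ↑(p * q₀) :=
      (Filter.biInter_mem hTfin).2 fun x hx => by
        have : B ∈ Ultrafilter.map (fun w => subst w x) (p * q₀) := (hmapq x hx).symm ▸ hB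
        exact Ultrafilter.mem_coe.2 (Ultrafilter.mem_map.1 this)
    exact Ultrafilter.mem_coe.1 this
  obtain ⟨w, hw1, hw2⟩ := Ultrafilter.nonempty_of_mem hbig
  exact ⟨w, hw1, fun x hx => Set.mem_iInter₂.1 hw2 x hx⟩

end HJ

theorem statement2 (𝒜 : ℕ → Set α) (hmono : Monotone 𝒜)
    (hfin : ∀ i, (𝒜 i).Finite) (hne : ∀ i, (𝒜 i).Nonempty)
    (n : ℕ) (hn : 1 ≤ n)
    (D : Set (FreeMonoid (α ⊕ Fin n))) (hD : D ⊆ S0 𝒜 n)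
    (hcentral : IsCentralIn (S0 𝒜 n) D) :
    ∃ w : ℕ → FreeMonoid (α ⊕ Fin n), (∀ i, w i ∈ SV 𝒜 n) ∧
      ∀ l : ℕ, 1 ≤ l → ∀ ms : Fin l → ℕ, StrictMono ms →
        ∀ a : Fin l → Fin n → α, (∀ i, a i ∈ tuples 𝒜 (ms i) n) →
          (List.ofFn fun i : Fin l => subst (w (ms i)) (a i)).prod ∈ D := by
  obtain ⟨p, hpS, hpp, ⟨K, hK, hpK⟩, hpD⟩ := hcentral
  set star : Set (FreeMonoid (α ⊕ Fin n)) → Set (FreeMonoid (α ⊕ Fin n)) :=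
    fun A => {x | x ∈ A ∧ {y | x * y ∈ A} ∈ p} with hstar_def
  have hstar_mem : ∀ A ∈ p, star A ∈ p := by
    intro A hA
    have h2 : {x | {y | x * y ∈ A} ∈ p} ∈ p := by
      have h : A ∈ p * p := hpp.symm ▸ hA
      rwa [mem_ultra_mul] at h
    exact umem_superset (umem_inter hA h2) fun x hx => ⟨hx.1, hx.2⟩
  have key : ∀ A, A ∈ p → ∀ m : ℕ, ∃ w ∈ SV 𝒜 n, ∀ x ∈ tuples 𝒜 m n, subst w x ∈ star A :=
    fun A hA m => hj_lemma hfin hn p hpS hpp hK hpK m (star A) (hstar_mem A hA)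
  choose W hWSV hWmem using key
  set next : (A : Set (FreeMonoid (α ⊕ Fin n))) → A ∈ p → ℕ → Set (FreeMonoid (α ⊕ Fin n)) :=
    fun A hA m => A ∩ ⋂ x ∈ tuples 𝒜 m n, {y | subst (W A hA m) x * y ∈ A} with hnext_def
  have hnext_mem : ∀ A (hA : A ∈ p) (m : ℕ), next A hA m ∈ p := by
    intro A hA m
    refine umem_inter hA (Ultrafilter.mem_coe.1
      ((Filter.biInter_mem (tuples_finite hfin m)).2 fun x hx => ?_))
    exact Ultrafilter.mem_coe.2 ((hWmem A hA m x hx).2)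
  let seq : ℕ → {A : Set (FreeMonoid (α ⊕ Fin n)) // A ∈ p} :=
    Nat.rec ⟨D, hpD⟩ fun m ih => ⟨next ih.1 ih.2 m, hnext_mem ih.1 ih.2 m⟩
  set w' : ℕ → FreeMonoid (α ⊕ Fin n) := fun m => W (seq m).1 (seq m).2 m with hw'def
  have hseq_succ : ∀ m, (seq (m + 1)).1 = next (seq m).1 (seq m).2 m := fun m => rfl
  have hdec : ∀ m, (seq (m + 1)).1 ⊆ (seq m).1 := fun m => Set.inter_subset_left
  have hmono' : ∀ a b : ℕ, a ≤ b → (seq b).1 ⊆ (seq a).1 := by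
    intro a b hab
    induction hab with
    | refl => exact subset_rfl
    | step h ih => exact (hdec _).trans ih
  have hsub_mem : ∀ m, ∀ x ∈ tuples 𝒜 m n, subst (w' m) x ∈ (seq m).1 :=
    fun m x hx => (hWmem (seq m).1 (seq m).2 m x hx).1
  have hstep : ∀ m, ∀ x ∈ tuples 𝒜 m n, ∀ y ∈ (seq (m + 1)).1,
      subst (w' m) x * y ∈ (seq m).1 := by
    intro m x hx y hy
    rw [hseq_succ] at hy
    exact Set.mem_iInter₂.1 hy.2 x hx
  have hseqD : ∀ m, (seq m).1 ⊆ D := fun m => hmono' 0 m (Nat.zero_le m)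
  have chain : ∀ k (ms : Fin (k + 1) → ℕ), StrictMono ms →
      ∀ a : Fin (k + 1) → Fin n → α, (∀ i, a i ∈ tuples 𝒜 (ms i) n) →
      (List.ofFn fun i : Fin (k + 1) => subst (w' (ms i)) (a i)).prod ∈ (seq (ms 0)).1 := by
    intro k
    induction k with
    | zero =>
      intro ms _ a ha
      have h : (List.ofFn fun i : Fin 1 => subst (w' (ms i)) (a i)) =
          [subst (w' (ms 0)) (a 0)] := by
        simp [List.ofFn_succ]
      rw [h, List.prod_singleton]
      exact hsub_mem (ms 0) (a 0) (ha 0)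
    | succ k ih =>
      intro ms hms a ha
      have h1 : (List.ofFn fun i : Fin (k + 2) => subst (w' (ms i)) (a i)) =
          subst (w' (ms 0)) (a 0) ::
            List.ofFn (fun i : Fin (k + 1) => subst (w' (ms i.succ)) (a i.succ)) := by
        rw [List.ofFn_succ]
      rw [h1, List.prod_cons]
      have hsucc_mono : StrictMono (fun i : Fin (k + 1) => ms i.succ) :=
        fun i j hij => hms (Fin.succ_lt_succ_iff.2 hij)
      have htail := ih (fun i => ms i.succ) hsucc_mono (fun i => a i.succ) (fun i => ha i.succ)
      have h01 : ms 0 < ms ((0 : Fin (k + 1)).succ) := hms (Fin.succ_pos 0)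
      have htail' := hmono' (ms 0 + 1) (ms ((0 : Fin (k + 1)).succ)) h01 htail
      exact hstep (ms 0) (a 0) (ha 0) _ htail'
  refine ⟨w', fun m => hWSV (seq m).1 (seq m).2 m, ?_⟩
  intro l hl ms hms a ha
  obtain ⟨k, rfl⟩ : ∃ k, l = k + 1 := ⟨l - 1, (Nat.succ_pred_eq_of_pos hl).symm⟩
  exact hseqD (ms 0) (chain k ms hms a ha)

end InfHJ
end
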